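/- Let p be a complex polynomial. Then (p(x₁) - p(x₂))² - (x₁-x₂)²·p'(x₁)p'(x₂) is divisible by (x₁-x₂)⁴ in ℂ[x₁,x₂]. Equivalently, (p(x₁)-p(x₂))²/(x₁-x₂)⁴ - p'(x₁)p'(x₂)/(x₁-x₂)² is a (symmetric) polynomial in x₁ and x₂. -/

import Mathlib

open MvPolynomial

open Polynomial in
private lemma aux_sq {A : Type*} [CommRing A] (a : A) (f : A[X])
    (h0 : f.eval a = 0) (h1 : f.derivative.eval a = 0) :
    (Polynomial.X - Polynomial.C a) ^ 2 ∣ f := by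
  obtain ⟨g, hg⟩ := (dvd_iff_isRoot).2 h0
  have hg' : g.eval a = 0 := by
    have := congrArg (fun q => Polynomial.eval a (Polynomial.derivative q)) hg
    simp [Polynomial.derivative_mul, Polynomial.eval_mul, h1] at this
    simpa using this.symm
  obtain ⟨h, hh⟩ := (dvd_iff_isRoot).2 hg'
  exact ⟨h, by rw [hg, hh]; ring⟩

open Polynomial in
private lemma aux_main {A : Type*} [CommRing A] (a : A) (q : A[X]) :
    (Polynomial.X - Polynomial.C a) ^ 4 ∣
      (q - Polynomial.C (q.eval a)) ^ 2
        - (Polynomial.X - Polynomial.C a) ^ 2 * q.derivative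
            * Polynomial.C (q.derivative.eval a) := by
  have h0 : (q - Polynomial.C (q.eval a)).eval a = 0 := by simp
  obtain ⟨r, hr⟩ := (dvd_iff_isRoot).2 h0
  have hq : q = Polynomial.C (q.eval a) + (Polynomial.X - Polynomial.C a) * r := by
    rw [← hr]; ring
  have hd : q.derivative = r + (Polynomial.X - Polynomial.C a) * r.derivative := by
    rw [hq]; simp [Polynomial.derivative_mul]
  have hra : q.derivative.eval a = r.eval a := by
    rw [hd]; simp
  have hd2 : (q.derivative).derivative.eval a = 2 * r.derivative.eval a := by
    rw [hd]
    simp [Polynomial.derivative_mul]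
    ring
  set g := r ^ 2 - q.derivative * Polynomial.C (r.eval a) with hgdef
  have hg0 : g.eval a = 0 := by
    simp [hgdef, hra]; ring
  have hg1 : g.derivative.eval a = 0 := by
    simp [hgdef, Polynomial.derivative_mul, Polynomial.derivative_pow, hd2, hra]
    ring
  obtain ⟨h, hh⟩ := aux_sq a g hg0 hg1
  refine ⟨h, ?_⟩
  have : (q - Polynomial.C (q.eval a)) ^ 2
        - (Polynomial.X - Polynomial.C a) ^ 2 * q.derivative
            * Polynomial.C (q.derivative.eval a)
      = (Polynomial.X - Polynomial.C a) ^ 2 * g := by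
    rw [hgdef, hra, hr]; ring
  rw [this, hh]; ring

/-- for `p ∈ ℂ[x]`, `(x₁-x₂)⁴` divides
`(p(x₁)-p(x₂))² - (x₁-x₂)²·p'(x₁)p'(x₂)` in `ℂ[x₁,x₂]`. -/
theorem pow_four_dvd (p : Polynomial ℂ) :
    (X 0 - X 1 : MvPolynomial (Fin 2) ℂ) ^ 4 ∣
      ((Polynomial.aeval (X 0 : MvPolynomial (Fin 2) ℂ) p - Polynomial.aeval (X 1) p) ^ 2
        - (X 0 - X 1) ^ 2 * Polynomial.aeval (X 0) p.derivative
            * Polynomial.aeval (X 1) p.derivative) := by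
  set A := MvPolynomial (Fin 2) ℂ
  set q : Polynomial A := p.map (algebraMap ℂ A) with hq
  have key := aux_main (X 1 : A) q
  have := map_dvd (Polynomial.evalRingHom (X 0 : A)) key
  simp only [map_sub, map_pow, map_mul, Polynomial.eval_sub, Polynomial.eval_pow,
    Polynomial.eval_mul, Polynomial.eval_X, Polynomial.eval_C,
    Polynomial.coe_evalRingHom] at this
  have e1 : Polynomial.eval (X 0 : A) q = Polynomial.aeval (X 0 : A) p := by
    rw [hq, Polynomial.eval_map]; rfl
  have e2 : Polynomial.eval (X 1 : A) q = Polynomial.aeval (X 1 : A) p := by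
    rw [hq, Polynomial.eval_map]; rfl
  have e3 : Polynomial.eval (X 0 : A) q.derivative
      = Polynomial.aeval (X 0 : A) p.derivative := by
    rw [hq, Polynomial.derivative_map, Polynomial.eval_map]; rfl
  have e4 : Polynomial.eval (X 1 : A) q.derivative
      = Polynomial.aeval (X 1 : A) p.derivative := by
    rw [hq, Polynomial.derivative_map, Polynomial.eval_map]; rfl
  rw [e1, e2, e3, e4] at this
  convert this using 1
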